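/- arXiv:2510.21227 — 4 statements merged into one kernel-verified Lean document; each statement's English description precedes it below -/
import Mathlib

section
/- For any m×m real matrix M, the function X ↦ log det(I + M X⁻¹ Mᵀ) is matrix-nonincreasing on the cone of positive definite matrices: if X₁ ⪰ X₂ ≻ 0 then log det(I + M X₁⁻¹ Mᵀ) ≤ log det(I + M X₂⁻¹ Mᵀ). -/
open Matrix Finset

variable {m : ℕ}

private lemma aux_sandwich {S Z : Matrix (Fin m) (Fin m) ℝ} (hS : IsUnit S.det) :
    S * (S⁻¹ * Z * S⁻¹) * S = Z := by
  simp only [Matrix.mul_assoc]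
  rw [Matrix.nonsing_inv_mul _ hS, Matrix.mul_one, ← Matrix.mul_assoc,
    Matrix.mul_nonsing_inv _ hS, Matrix.one_mul]

private lemma aux_eig_ge_one {C : Matrix (Fin m) (Fin m) ℝ} (hH : C.IsHermitian)
    (hC : (C - 1).PosSemidef) (i : Fin m) : 1 ≤ hH.eigenvalues i := by
  set U : Matrix (Fin m) (Fin m) ℝ := (hH.eigenvectorUnitary : Matrix (Fin m) (Fin m) ℝ) with hU
  have h1 := hC.conjTranspose_mul_mul_same (B := U)
  have key : Uᴴ * (C - 1) * U = diagonal (fun j => hH.eigenvalues j - 1) := by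
    have h2 : star U * C * U = diagonal (RCLike.ofReal ∘ hH.eigenvalues) :=
      by simpa using hH.conjStarAlgAut_star_eigenvectorUnitary
    have h3 : star U * U = 1 := Unitary.coe_star_mul_self hH.eigenvectorUnitary
    rw [Matrix.star_eq_conjTranspose] at h2 h3
    rw [Matrix.mul_sub, Matrix.sub_mul, h2, Matrix.mul_one, h3]
    ext j k
    by_cases hjk : j = k <;> simp [diagonal, hjk]
  rw [key] at h1
  have := (Matrix.posSemidef_diagonal_iff.mp h1) i
  linarith

private lemma aux_one_le_det {P : Matrix (Fin m) (Fin m) ℝ} (hP : P.PosSemidef) :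
    1 ≤ (1 + P).det := by
  have hH : (1 + P).IsHermitian := Matrix.isHermitian_one.add hP.isHermitian
  have heig : ∀ i, 1 ≤ hH.eigenvalues i := by
    intro i
    exact aux_eig_ge_one hH (by simpa using hP) i
  have : (1:ℝ) ≤ ∏ i, hH.eigenvalues i := by
    calc (1:ℝ) = ∏ _i : Fin m, (1:ℝ) := by simp
    _ ≤ ∏ i, hH.eigenvalues i :=
      Finset.prod_le_prod (fun _ _ => zero_le_one) (fun i _ => heig i)
  calc (1:ℝ) ≤ ∏ i, hH.eigenvalues i := this
  _ = (1 + P).det := by rw [hH.det_eq_prod_eigenvalues]; norm_num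

open scoped MatrixOrder in
private lemma aux_det_mono {A B : Matrix (Fin m) (Fin m) ℝ} (hA : A.PosDef)
    (hBA : (B - A).PosSemidef) : A.det ≤ B.det := by
  set S := CFC.sqrt A with hSdef
  have hS : S.PosSemidef := (CFC.sqrt_nonneg A).posSemidef
  have hSS : S * S = A := CFC.sqrt_mul_sqrt_self A hA.posSemidef.nonneg
  have hm : S.det * S.det = A.det := by rw [← Matrix.det_mul, hSS]
  have hdetS : IsUnit S.det := by
    have hpos : 0 < S.det * S.det := hm ▸ hA.det_pos
    exact isUnit_iff_ne_zero.mpr fun h => by rw [h] at hpos; simp at hpos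
  have hHerm : S⁻¹ᴴ = S⁻¹ := hS.inv.isHermitian
  have hPpsd : (S⁻¹ * (B - A) * S⁻¹).PosSemidef := by
    have := hBA.mul_mul_conjTranspose_same S⁻¹
    rwa [hHerm] at this
  have hB : B = S * (1 + S⁻¹ * (B - A) * S⁻¹) * S := by
    rw [Matrix.mul_add, Matrix.mul_one, Matrix.add_mul, aux_sandwich hdetS, hSS]
    abel
  have hdet : B.det = A.det * (1 + S⁻¹ * (B - A) * S⁻¹).det := by
    conv_lhs => rw [hB]
    rw [Matrix.det_mul, Matrix.det_mul, ← hm]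
    ring
  rw [hdet]
  exact le_mul_of_one_le_right hA.det_pos.le (aux_one_le_det hPpsd)

open scoped MatrixOrder in
private lemma aux_one_sub_inv {A : Matrix (Fin m) (Fin m) ℝ}
    (hAinv : A⁻¹.PosSemidef) (hdet : IsUnit A.det) (h1 : (A - 1).PosSemidef) :
    (1 - A⁻¹).PosSemidef := by
  set T := CFC.sqrt A⁻¹ with hT
  have hTpsd : T.PosSemidef := (CFC.sqrt_nonneg A⁻¹).posSemidef
  have hTT : T * T = A⁻¹ := CFC.sqrt_mul_sqrt_self A⁻¹ hAinv.nonneg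
  have hdetT : IsUnit T.det := by
    have hm : T.det * T.det = A⁻¹.det := by rw [← Matrix.det_mul, hTT]
    have : IsUnit (T.det * T.det) := hm ▸ (Matrix.isUnit_nonsing_inv_det A hdet)
    exact isUnit_of_mul_isUnit_left this
  have hT' : T = A⁻¹ * T⁻¹ := by
    rw [← hTT, Matrix.mul_assoc, Matrix.mul_nonsing_inv _ hdetT, Matrix.mul_one]
  have h5 : T * A * (T * T) = T := by
    rw [hTT, Matrix.mul_assoc, Matrix.mul_nonsing_inv _ hdet, Matrix.mul_one]
  have key : T * A * T = 1 := by
    calc T * A * T = T * A * (T * (T * T⁻¹)) := by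
          rw [Matrix.mul_nonsing_inv _ hdetT, Matrix.mul_one]
    _ = T * A * (T * T) * T⁻¹ := by simp only [Matrix.mul_assoc]
    _ = T * T⁻¹ := by rw [h5]
    _ = 1 := Matrix.mul_nonsing_inv _ hdetT
  have heq : T * (A - 1) * T = 1 - A⁻¹ := by
    rw [Matrix.mul_sub, Matrix.mul_one, Matrix.sub_mul, key, hTT]
  have := h1.mul_mul_conjTranspose_same T
  rwa [hTpsd.isHermitian, heq] at this

open scoped MatrixOrder in
private lemma aux_inv_sub {X₁ X₂ : Matrix (Fin m) (Fin m) ℝ}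
    (hX₁ : X₁.PosDef) (hX₂ : X₂.PosDef) (h : (X₁ - X₂).PosSemidef) :
    (X₂⁻¹ - X₁⁻¹).PosSemidef := by
  set S := CFC.sqrt X₂⁻¹ with hSdef
  have hS : S.PosSemidef := (CFC.sqrt_nonneg X₂⁻¹).posSemidef
  have hSS : S * S = X₂⁻¹ := CFC.sqrt_mul_sqrt_self X₂⁻¹ hX₂.inv.posSemidef.nonneg
  have hdetS : IsUnit S.det := by
    have hm : S.det * S.det = X₂⁻¹.det := by rw [← Matrix.det_mul, hSS]
    have : IsUnit (S.det * S.det) := hm ▸ (Matrix.isUnit_nonsing_inv_det X₂ hX₂.det_pos.ne'.isUnit)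
    exact isUnit_of_mul_isUnit_left this
  have hX2 : X₂ = S⁻¹ * S⁻¹ := by
    rw [← Matrix.mul_inv_rev, hSS, Matrix.nonsing_inv_nonsing_inv _ hX₂.det_pos.ne'.isUnit]
  set A := S * X₁ * S with hAdef
  have hAinv : A⁻¹ = S⁻¹ * X₁⁻¹ * S⁻¹ := by
    rw [hAdef, Matrix.mul_inv_rev, Matrix.mul_inv_rev, Matrix.mul_assoc]
  have hAinvPSD : A⁻¹.PosSemidef := by
    have := hX₁.inv.posSemidef.mul_mul_conjTranspose_same S⁻¹
    rw [hS.inv.isHermitian] at this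
    rwa [hAinv]
  have hdetA : IsUnit A.det := by
    rw [hAdef, Matrix.det_mul, Matrix.det_mul]
    exact (hdetS.mul hX₁.det_pos.ne'.isUnit).mul hdetS
  have hS2 : S * X₂ * S = 1 := by
    rw [hX2]
    simp only [Matrix.mul_assoc]
    rw [Matrix.nonsing_inv_mul _ hdetS, Matrix.mul_one, Matrix.mul_nonsing_inv _ hdetS]
  have hA1 : (A - 1).PosSemidef := by
    have heq : S * (X₁ - X₂) * S = A - 1 := by
      rw [Matrix.mul_sub, Matrix.sub_mul, hS2, hAdef]
    have := h.mul_mul_conjTranspose_same S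
    rwa [hS.isHermitian, heq] at this
  have h3a := aux_one_sub_inv hAinvPSD hdetA hA1
  have heq2 : S * (1 - A⁻¹) * S = X₂⁻¹ - X₁⁻¹ := by
    rw [Matrix.mul_sub, Matrix.mul_one, Matrix.sub_mul, hSS, hAinv, aux_sandwich hdetS]
  have := h3a.mul_mul_conjTranspose_same S
  rwa [hS.isHermitian, heq2] at this

theorem logdet_inv_antitone (m : ℕ) (M X₁ X₂ : Matrix (Fin m) (Fin m) ℝ)
    (hX₁ : X₁.PosDef) (hX₂ : X₂.PosDef) (h : (X₁ - X₂).PosSemidef) :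
    Real.log (1 + M * X₁⁻¹ * Mᵀ).det ≤ Real.log (1 + M * X₂⁻¹ * Mᵀ).det := by
  have hinv := aux_inv_sub hX₁ hX₂ h
  have hK : (M * (X₂⁻¹ - X₁⁻¹) * Mᵀ).PosSemidef := by
    have := hinv.mul_mul_conjTranspose_same M
    rwa [conjTranspose_eq_transpose_of_trivial] at this
  have hA : (1 + M * X₁⁻¹ * Mᵀ).PosDef := by
    refine Matrix.PosDef.one.add_posSemidef ?_
    have := hX₁.inv.posSemidef.mul_mul_conjTranspose_same M
    rwa [conjTranspose_eq_transpose_of_trivial] at this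
  have hsub : (1 + M * X₂⁻¹ * Mᵀ) - (1 + M * X₁⁻¹ * Mᵀ) = M * (X₂⁻¹ - X₁⁻¹) * Mᵀ := by
    rw [Matrix.mul_sub, Matrix.sub_mul]
    abel
  have hdet := aux_det_mono hA (by rw [hsub]; exact hK)
  exact Real.log_le_log hA.det_pos hdet
end

section
/- The function f(X) = -log det(I + X) + tr(X) is matrix-nondecreasing on PSD matrices: if X₁ ⪰ X₂ ⪰ 0 then f(X₁) ≥ f(X₂). -/
/-!
With `P = 1 + X₂` and `D = X₁ - X₂`, concavity of `log det` gives
`log det (P + D) ≤ log det P + tr (P⁻¹ D)`: factoring `P⁻¹ = Bᴴ B` turns this into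
`log det (1 + B D Bᴴ) ≤ tr (B D Bᴴ)`, which is `log λ ≤ λ - 1` summed over eigenvalues.
Since `P ⪰ 1` we have `P⁻¹ ⪯ 1`, so `tr (P⁻¹ D) ≤ tr D = tr X₁ - tr X₂`.
-/

open Matrix
open scoped ComplexOrder MatrixOrder

namespace Matrix

variable {n 𝕜 : Type*} [Fintype n] [DecidableEq n] [RCLike 𝕜]

theorem PosSemidef.trace_mul_nonneg {A B : Matrix n n 𝕜} (hA : A.PosSemidef)
    (hB : B.PosSemidef) : 0 ≤ (A * B).trace := by
  obtain ⟨C, rfl⟩ := CStarAlgebra.nonneg_iff_eq_star_mul_self.mp hA.nonneg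
  rw [star_eq_conjTranspose, Matrix.mul_assoc, trace_mul_comm]
  exact (hB.mul_mul_conjTranspose_same C).trace_nonneg

theorem PosSemidef.one_sub_inv_one_add {X : Matrix n n 𝕜} (hX : X.PosSemidef) :
    (1 - (1 + X)⁻¹).PosSemidef := by
  set Y := (1 + X)⁻¹
  have hunit : IsUnit (1 + X).det := (PosDef.one.add_posSemidef hX).isUnit.map detMonoidHom
  have hY : Yᴴ = Y := (isHermitian_one.add hX.isHermitian).inv
  have hYX : Y * X = 1 - Y := by
    rw [eq_sub_iff_add_eq, add_comm, ← mul_one_add, nonsing_inv_mul _ hunit]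
  have hconj : Y * (X + Xᴴ * X) * Yᴴ = 1 - Y := by
    rw [hX.isHermitian.eq, hY, ← mul_one_add, ← Matrix.mul_assoc, Matrix.mul_assoc _ _ Y,
      mul_nonsing_inv _ hunit, Matrix.mul_one, hYX]
  exact hconj ▸ (hX.add (posSemidef_conjTranspose_mul_self X)).mul_mul_conjTranspose_same Y

theorem PosSemidef.trace_inv_one_add_mul_le {X D : Matrix n n 𝕜} (hX : X.PosSemidef)
    (hD : D.PosSemidef) : ((1 + X)⁻¹ * D).trace ≤ D.trace := by
  have := hX.one_sub_inv_one_add.trace_mul_nonneg hD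
  rwa [Matrix.sub_mul, Matrix.one_mul, trace_sub, sub_nonneg] at this

theorem PosDef.log_det_le_trace_sub_card {Q : Matrix n n ℝ} (hQ : Q.PosDef) :
    Real.log Q.det ≤ Q.trace - Fintype.card n := by
  have hpos := hQ.eigenvalues_pos
  rw [hQ.isHermitian.det_eq_prod_eigenvalues, hQ.isHermitian.trace_eq_sum_eigenvalues]
  simp only [RCLike.ofReal_real_eq_id, id_eq]
  rw [Real.log_prod fun i _ => (hpos i).ne']
  calc ∑ i, Real.log (hQ.isHermitian.eigenvalues i)
      ≤ ∑ i, (hQ.isHermitian.eigenvalues i - 1) :=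
        Finset.sum_le_sum fun i _ => Real.log_le_sub_one_of_pos (hpos i)
    _ = _ := by simp [Finset.sum_sub_distrib]

theorem PosSemidef.log_det_one_add_le_trace {M : Matrix n n ℝ} (hM : M.PosSemidef) :
    Real.log (1 + M).det ≤ M.trace := by
  have := (PosDef.one.add_posSemidef hM).log_det_le_trace_sub_card
  rwa [trace_add, trace_one, add_sub_cancel_left] at this

theorem PosDef.log_det_add_le {P D : Matrix n n ℝ} (hP : P.PosDef) (hD : D.PosSemidef) :
    Real.log (P + D).det ≤ Real.log P.det + (P⁻¹ * D).trace := by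
  obtain ⟨B, hB⟩ := CStarAlgebra.nonneg_iff_eq_star_mul_self.mp hP.inv.posSemidef.nonneg
  rw [star_eq_conjTranspose] at hB
  have hunit : IsUnit P.det := hP.isUnit.map detMonoidHom
  have hBPB : B * P * Bᴴ = 1 := by
    rw [mul_eq_one_comm, ← Matrix.mul_assoc, ← hB, nonsing_inv_mul _ hunit]
  set M := B * D * Bᴴ
  have hM : M.PosSemidef := hD.mul_mul_conjTranspose_same B
  have hdet : (P + D).det = P.det * (1 + M).det := by
    have : (1 + M).det = P⁻¹.det * (P + D).det := by
      rw [← hBPB, ← Matrix.add_mul, ← Matrix.mul_add, det_mul, det_mul, mul_comm, ← mul_assoc,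
        ← det_mul, ← hB]
    rw [this, ← mul_assoc, ← det_mul, mul_nonsing_inv _ hunit, det_one, one_mul]
  have htrace : M.trace = (P⁻¹ * D).trace := by rw [trace_mul_cycle, ← hB]
  rw [hdet, Real.log_mul hP.det_pos.ne' (PosDef.one.add_posSemidef hM).det_pos.ne', ← htrace]
  exact add_le_add_right hM.log_det_one_add_le_trace _

end Matrix

theorem neg_logdet_add_trace_monotone (m : ℕ)
    (X₁ X₂ : Matrix (Fin m) (Fin m) ℝ)
    (h : (X₁ - X₂).PosSemidef) (hX₂ : X₂.PosSemidef) :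
    -Real.log (1 + X₂).det + X₂.trace ≤ -Real.log (1 + X₁).det + X₁.trace := by
  have hlog := (PosDef.one.add_posSemidef hX₂).log_det_add_le h
  rw [add_add_sub_cancel] at hlog
  have htrace := hX₂.trace_inv_one_add_mul_le h
  rw [trace_sub] at htrace
  linarith
end

section
/- Let φ, u ∈ ℝˡ and set Φ̃ = φφᵀ + φuᵀ + uφᵀ. If φᵀu - √((φᵀφ)(uᵀu)) ≥ 0 then Φ̃ is positive semidefinite; if φᵀφ + φᵀu + √((φᵀφ)(uᵀu)) ≤ 0 then Φ̃ is negative semidefinite. -/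
/-! By Cauchy–Schwarz, `|φ ⬝ᵥ u| ≤ √((φ ⬝ᵥ φ) * (u ⬝ᵥ u))`. The first hypothesis therefore forces
equality, so `u = c • φ` with `c ≥ 0` and `Φ̃ = (1 + 2c) φφᵀ`; the second forces `φ ⬝ᵥ φ ≤ 0`, so
`φ = 0` and `Φ̃ = 0`. -/

open Matrix

section
variable {n : Type*} [Fintype n]

theorem abs_dotProduct_le_sqrt_mul (x y : n → ℝ) : |x ⬝ᵥ y| ≤ √((x ⬝ᵥ x) * (y ⬝ᵥ y)) :=
  Real.abs_le_sqrt <| by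
    simpa only [dotProduct, sq] using Finset.sum_mul_sq_le_sq_mul_sq Finset.univ x y

theorem eq_smul_of_dotProduct_sq_eq {R : Type*} [Field R] [LinearOrder R] [IsStrictOrderedRing R]
    {x y : n → R} (hx : x ≠ 0) (h : (x ⬝ᵥ y) ^ 2 = (x ⬝ᵥ x) * (y ⬝ᵥ y)) :
    y = ((x ⬝ᵥ y) / (x ⬝ᵥ x)) • x := by
  have hxx : x ⬝ᵥ x ≠ 0 := mt dotProduct_self_eq_zero.mp hx
  set v := (x ⬝ᵥ x) • y - (x ⬝ᵥ y) • x
  -- Lagrange identity: `v ⬝ᵥ v = (x ⬝ᵥ x) * ((x ⬝ᵥ x) * (y ⬝ᵥ y) - (x ⬝ᵥ y) ^ 2)`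
  have hv : v ⬝ᵥ v = 0 := by
    simp only [v, sub_dotProduct, dotProduct_sub, smul_dotProduct, dotProduct_smul, smul_eq_mul,
      dotProduct_comm y x]
    linear_combination (-(x ⬝ᵥ x)) * h
  have : (x ⬝ᵥ x) • y = (x ⬝ᵥ y) • x := sub_eq_zero.mp (dotProduct_self_eq_zero.mp hv)
  rw [div_eq_inv_mul, mul_smul, ← this, smul_smul, inv_mul_cancel₀ hxx, one_smul]

theorem posSemidef_vecMulVec_add_smul {φ : n → ℝ} {c : ℝ} (hc : 0 ≤ 1 + 2 * c) :
    (vecMulVec φ φ + vecMulVec φ (c • φ) + vecMulVec (c • φ) φ).PosSemidef := by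
  have h : vecMulVec φ φ + vecMulVec φ (c • φ) + vecMulVec (c • φ) φ =
      (1 + 2 * c) • vecMulVec φ (star φ) := by
    rw [star_trivial, vecMulVec_smul, smul_vecMulVec]
    module
  rw [h]
  exact (posSemidef_vecMulVec_self_star φ).smul hc

end

theorem phi_tilde_semidef (l : ℕ) (φ u : Fin l → ℝ) :
    (φ ⬝ᵥ u - Real.sqrt ((φ ⬝ᵥ φ) * (u ⬝ᵥ u)) ≥ 0 →
      (vecMulVec φ φ + vecMulVec φ u + vecMulVec u φ).PosSemidef) ∧
    (φ ⬝ᵥ φ + φ ⬝ᵥ u + Real.sqrt ((φ ⬝ᵥ φ) * (u ⬝ᵥ u)) ≤ 0 →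
      (-(vecMulVec φ φ + vecMulVec φ u + vecMulVec u φ)).PosSemidef) := by
  have hcs := abs_dotProduct_le_sqrt_mul φ u
  have hφφ : 0 ≤ φ ⬝ᵥ φ := Finset.sum_nonneg fun i _ => mul_self_nonneg (φ i)
  constructor
  · intro h
    obtain rfl | hφ := eq_or_ne φ 0
    · simpa using PosSemidef.zero
    have heq : φ ⬝ᵥ u = √((φ ⬝ᵥ φ) * (u ⬝ᵥ u)) := by linarith [le_abs_self (φ ⬝ᵥ u)]
    have hsq : (φ ⬝ᵥ u) ^ 2 = (φ ⬝ᵥ φ) * (u ⬝ᵥ u) := by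
      rw [heq, Real.sq_sqrt]
      exact mul_nonneg hφφ (Finset.sum_nonneg fun i _ => mul_self_nonneg (u i))
    have hc : 0 ≤ (φ ⬝ᵥ u) / (φ ⬝ᵥ φ) := div_nonneg (heq ▸ Real.sqrt_nonneg _) hφφ
    rw [eq_smul_of_dotProduct_sq_eq hφ hsq]
    exact posSemidef_vecMulVec_add_smul (by linarith)
  · intro h
    obtain rfl : φ = 0 := dotProduct_self_eq_zero.mp <| le_antisymm
      (by linarith [neg_abs_le (φ ⬝ᵥ u)]) hφφ
    simpa using PosSemidef.zero
end

section
/- Let S, T₁, T₂ be symmetric m×m matrices with S ⪰ 0, and suppose T₁ ⪰ T₂ ⪰ 0. Then -log det(I + S^{1/2}T₁S^{1/2}) + tr(S^{1/2}T₁S^{1/2}) ≥ -log det(I + S^{1/2}T₂S^{1/2}) + tr(S^{1/2}T₂S^{1/2}). -/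
open Matrix

open scoped ComplexOrder in
/-- The positive semidefinite square root of a positive semidefinite matrix
(definition removed from Mathlib; restored verbatim from Mathlib of December 2024). -/
noncomputable def Matrix.PosSemidef.sqrt {n : Type*} [Fintype n] [DecidableEq n] {𝕜 : Type*}
    [RCLike 𝕜] {A : Matrix n n 𝕜} (hA : A.PosSemidef) : Matrix n n 𝕜 :=
  hA.1.eigenvectorUnitary.1 * diagonal ((↑) ∘ (√·) ∘ hA.1.eigenvalues) *
  (star hA.1.eigenvectorUnitary : Matrix n n 𝕜)

/-!
Put `B = S^{1/2} T S^{1/2}`; conjugation by the self-adjoint `S^{1/2}` preserves the Loewner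
order, so it suffices that `B ↦ -log det (1 + B) + tr B` is monotone on positive semidefinite
matrices. For `0 ≤ A` and `0 ≤ D = R²`, put `C = 1 + A`. Sylvester's determinant identity gives
`det (1 + A + D) = det C · det (1 + R C⁻¹ R)`; then `log det (1 + E) ≤ tr E` eigenvalue by
eigenvalue from `log (1 + x) ≤ x`, and `tr (R C⁻¹ R) ≤ tr (R R) = tr D` because `C⁻¹ ≤ 1`.
-/

open scoped MatrixOrder ComplexOrder

namespace Matrix

variable {n : Type*} [Fintype n] [DecidableEq n] {𝕜 : Type*} [RCLike 𝕜]

lemma PosSemidef.sqrt_eq_cfc {A : Matrix n n 𝕜} (hA : A.PosSemidef) :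
    hA.sqrt = cfc Real.sqrt A := by
  rw [hA.1.cfc_eq]
  rfl

lemma PosSemidef.isHermitian_sqrt {A : Matrix n n 𝕜} (hA : A.PosSemidef) : hA.sqrt.IsHermitian :=
  hA.sqrt_eq_cfc ▸ cfc_predicate _ _

lemma IsHermitian.cfc_one_add {A : Matrix n n 𝕜} (hA : A.IsHermitian) :
    cfc (fun x : ℝ => 1 + x) A = 1 + A := by
  rw [cfc_add .., cfc_const_one .., cfc_id' ..]

lemma IsHermitian.det_cfc {A : Matrix n n ℝ} (hA : A.IsHermitian) (f : ℝ → ℝ) :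
    (cfc f A).det = ∏ i, f (hA.eigenvalues i) := by
  rw [hA.cfc_eq]
  simp [IsHermitian.cfc, -Unitary.conjStarAlgAut_apply]

lemma PosSemidef.log_det_one_add_le_trace_s16 {A : Matrix n n ℝ} (hA : A.PosSemidef) :
    Real.log (1 + A).det ≤ A.trace := by
  have one_add_pos (i : n) : 0 < 1 + hA.1.eigenvalues i := by linarith [hA.eigenvalues_nonneg i]
  rw [← hA.1.cfc_one_add, hA.1.det_cfc, hA.1.trace_eq_sum_eigenvalues,
    Real.log_prod fun i _ => (one_add_pos i).ne']
  refine Finset.sum_le_sum fun i _ => ?_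
  rw [RCLike.ofReal_real_eq_id, id]
  linarith [Real.log_le_sub_one_of_pos (one_add_pos i)]

lemma PosSemidef.inv_one_add_le_one {A : Matrix n n 𝕜} (hA : A.PosSemidef) : (1 + A)⁻¹ ≤ 1 := by
  have spectrum_nonneg : ∀ x ∈ spectrum ℝ A, 0 ≤ x := fun x hx =>
    spectrum_nonneg_of_nonneg hA.nonneg hx
  have hcfc : (1 + A)⁻¹ = cfc (fun x : ℝ => (1 + x)⁻¹) A := by
    rw [cfc_inv (fun x : ℝ => 1 + x) A fun x hx => by linarith [spectrum_nonneg x hx],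
      hA.1.cfc_one_add, nonsing_inv_eq_ringInverse]
  rw [hcfc]
  exact cfc_le_one _ _ fun x hx => inv_le_one_of_one_le₀ (by linarith [spectrum_nonneg x hx])

lemma PosSemidef.log_det_one_add_add_le {A D : Matrix n n ℝ} (hA : A.PosSemidef)
    (hD : D.PosSemidef) :
    Real.log (1 + (A + D)).det ≤ Real.log (1 + A).det + D.trace := by
  set C := 1 + A with hC_def
  have hC : C.PosDef := PosDef.one.add_posSemidef hA
  set R := CFC.sqrt D
  have hR : IsSelfAdjoint R := (CFC.sqrt_nonneg D).isSelfAdjoint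
  have hRR : R * R = D := CFC.sqrt_mul_sqrt_self D hD.nonneg
  set E := R * C⁻¹ * R
  have hE : E.PosSemidef :=
    nonneg_iff_posSemidef.mp (hR.conjugate_nonneg hC.inv.posSemidef.nonneg)
  have hED : E ≤ D := by
    simpa [hRR] using hR.conjugate_le_conjugate hA.inv_one_add_le_one
  have hfactor : 1 + (A + D) = C * (1 + C⁻¹ * R * R) := by
    rw [mul_add, mul_one, ← mul_assoc, ← mul_assoc,
      mul_nonsing_inv _ (isUnit_iff_ne_zero.mpr hC.det_pos.ne'), one_mul, hRR, hC_def, add_assoc]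
  have hdet : (1 + (A + D)).det = C.det * (1 + E).det := by
    rw [hfactor, det_mul, det_one_add_mul_comm (C⁻¹ * R) R, ← mul_assoc]
  have htrace : E.trace ≤ D.trace := (tracePositiveLinearMap n ℝ ℝ).monotone hED
  calc Real.log (1 + (A + D)).det = Real.log C.det + Real.log (1 + E).det := by
        rw [hdet, Real.log_mul hC.det_pos.ne' (PosDef.one.add_posSemidef hE).det_pos.ne']
    _ ≤ Real.log C.det + D.trace := by linarith [hE.log_det_one_add_le_trace_s16]

end Matrix

noncomputable def klCost {n : Type*} [Fintype n] [DecidableEq n] (B : Matrix n n ℝ) : ℝ :=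
  -Real.log (1 + B).det + B.trace

lemma klCost_monotoneOn {n : Type*} [Fintype n] [DecidableEq n] :
    MonotoneOn klCost {A : Matrix n n ℝ | 0 ≤ A} := by
  intro A hA B _ hAB
  obtain ⟨D, hD, rfl⟩ : ∃ D, 0 ≤ D ∧ B = A + D := ⟨B - A, sub_nonneg.mpr hAB, by abel⟩
  have := (nonneg_iff_posSemidef.mp hA).log_det_one_add_add_le (nonneg_iff_posSemidef.mp hD)
  simp only [klCost, trace_add]
  linarith

theorem kl_cost_monotone (m : ℕ) (S T₁ T₂ : Matrix (Fin m) (Fin m) ℝ)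
    (hS : S.PosSemidef) (h12 : (T₁ - T₂).PosSemidef) (hT₂ : T₂.PosSemidef) :
    -Real.log (1 + hS.sqrt * T₂ * hS.sqrt).det + (hS.sqrt * T₂ * hS.sqrt).trace ≤
    -Real.log (1 + hS.sqrt * T₁ * hS.sqrt).det + (hS.sqrt * T₁ * hS.sqrt).trace := by
  have hsqrt : IsSelfAdjoint hS.sqrt := hS.isHermitian_sqrt
  have hT₂' : 0 ≤ hS.sqrt * T₂ * hS.sqrt := hsqrt.conjugate_nonneg hT₂.nonneg
  have hle : hS.sqrt * T₂ * hS.sqrt ≤ hS.sqrt * T₁ * hS.sqrt := hsqrt.conjugate_le_conjugate h12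
  exact klCost_monotoneOn hT₂' (hT₂'.trans hle) hle
end
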